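/- Let N be a tree-child network on n ≥ 2 leaves with r reticulations, of which r₁ have a leaf as child. Then N has exactly n + r₁ − 2 pure inner tree edges, i.e. edges that are incident to no reticulation, no leaf, and not to the root. -/

import Mathlib

/-!
Formalization of rooted binary phylogenetic networks (directed multigraphs with
labelled leaves), tree-child networks, and the SNPR / SNPR+ / SNPR− rearrangement
operations, following Klawitter, "The SNPR neighbourhood of tree-child networks".
-/

noncomputable section

attribute [local instance] Classical.propDecidable

/-- Raw data of a (rooted, binary) phylogenetic network on `n` taxa: a finite vertex set
(vertices are natural numbers), a multiset of directed edges (parallel edges allowed),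
a distinguished root, and an injective labelling of the leaves by `Fin n`. -/
structure RawNet (n : ℕ) where
  V : Finset ℕ
  E : Multiset (ℕ × ℕ)
  root : ℕ
  leaf : Fin n → ℕ

namespace RawNet

variable {n : ℕ}

/-- Adjacency: there is an edge from `a` to `b`. -/
def Adj (N : RawNet n) (a b : ℕ) : Prop := (a, b) ∈ N.E

/-- In-degree of a vertex (counting parallel edges). -/
def inDeg (N : RawNet n) (v : ℕ) : ℕ := (N.E.filter (fun e => e.2 = v)).card

/-- Out-degree of a vertex (counting parallel edges). -/
def outDeg (N : RawNet n) (v : ℕ) : ℕ := (N.E.filter (fun e => e.1 = v)).card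

/-- `v` is a reticulation (in-degree two). -/
def IsRet (N : RawNet n) (v : ℕ) : Prop := N.inDeg v = 2

/-- Edge `g` is a descendant of edge `e`: `g` starts at the head of `e` or at a vertex
reachable from the head of `e` by a directed path. -/
def EdgeDesc (N : RawNet n) (e g : ℕ × ℕ) : Prop :=
  g.1 = e.2 ∨ Relation.TransGen N.Adj e.2 g.1

/-- `δ(e)`: the number of descendant edges of `e`. -/
def delta (N : RawNet n) (e : ℕ × ℕ) : ℕ :=
  (N.E.filter (fun g => N.EdgeDesc e g)).card

/-- `δ_T(e)`: the number of descendant tree edges of `e`. -/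
def deltaT (N : RawNet n) (e : ℕ × ℕ) : ℕ :=
  (N.E.filter (fun g => N.EdgeDesc e g ∧ ¬ N.IsRet g.2)).card

/-- `N` is a valid rooted binary phylogenetic network: a DAG whose root has in-degree 0 and
out-degree 1, whose `n` leaves (in-degree 1, out-degree 0) are bijectively labelled, and all
of whose other vertices are inner tree vertices (in 1, out 2) or reticulations (in 2, out 1). -/
structure IsPhylo (N : RawNet n) : Prop where
  edge_mem : ∀ e ∈ N.E, e.1 ∈ N.V ∧ e.2 ∈ N.V
  acyclic : ∀ v, ¬ Relation.TransGen N.Adj v v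
  root_mem : N.root ∈ N.V
  root_in : N.inDeg N.root = 0
  root_out : N.outDeg N.root = 1
  leaf_mem : ∀ i, N.leaf i ∈ N.V
  leaf_inj : Function.Injective N.leaf
  leaf_in : ∀ i, N.inDeg (N.leaf i) = 1
  leaf_out : ∀ i, N.outDeg (N.leaf i) = 0
  classify : ∀ v ∈ N.V, v = N.root ∨ (∃ i, v = N.leaf i) ∨
    (N.inDeg v = 1 ∧ N.outDeg v = 2) ∨ (N.inDeg v = 2 ∧ N.outDeg v = 1)

/-- Tree-child: every non-leaf vertex has a child that is a tree vertex. -/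
def TreeChild (N : RawNet n) : Prop :=
  ∀ v ∈ N.V, 1 ≤ N.outDeg v → ∃ w, (v, w) ∈ N.E ∧ ¬ N.IsRet w

/-- Isomorphism of networks fixing the labelled leaves (and the root). -/
def Iso (A B : RawNet n) : Prop :=
  ∃ φ : ℕ → ℕ, Set.BijOn φ ↑A.V ↑B.V ∧
    B.E = A.E.map (fun p => (φ p.1, φ p.2)) ∧
    φ A.root = B.root ∧ ∀ i, φ (A.leaf i) = B.leaf i

/-- The network resulting from the SNPR operation that prunes the edge `(u,v)` (where `u` has
parent edge `(a,u)` and sibling edge `(u,w)`) and regrafts it to the edge `(x,y)`, using the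
fresh vertex `u''` to subdivide the regraft edge.  If the regraft edge is the parent or
sibling edge of `u`, it has become the edge `(a,w)` after suppressing `u`. -/
def snprResult (N : RawNet n) (u v a w x y u'' : ℕ) : RawNet n :=
  let E1 : Multiset (ℕ × ℕ) := (((N.E.erase (u, v)).erase (a, u)).erase (u, w)) + {(a, w)}
  let f : ℕ × ℕ := if (x, y) = (a, u) ∨ (x, y) = (u, w) then (a, w) else (x, y)
  { V := insert u'' (N.V.erase u)
    E := (E1.erase f) + {(f.1, u''), (u'', f.2), (u'', v)}
    root := N.root
    leaf := N.leaf }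

/-- The network resulting from the SNPR+ operation `(e,f)`: subdivide `f` with `u'` and `e`
with `v'` and add the edge `(u',v')`; if `e = f`, subdivide `e` twice (with `u'` the parent
of `v'`) and add the (parallel) edge `(u',v')`. -/
def snprPlusResult (N : RawNet n) (e f : ℕ × ℕ) (u' v' : ℕ) : RawNet n :=
  if e = f then
    { V := insert u' (insert v' N.V)
      E := (N.E.erase e) + {(e.1, u'), (u', v'), (u', v'), (v', e.2)}
      root := N.root
      leaf := N.leaf }
  else
    { V := insert u' (insert v' N.V)
      E := ((N.E.erase e).erase f) + {(e.1, v'), (v', e.2), (f.1, u'), (u', f.2), (u', v')}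
      root := N.root
      leaf := N.leaf }

/-- The network resulting from the SNPR− operation deleting the reticulation edge `(u,v)`
and suppressing `u` and `v`; here `(a,u)` is the parent edge of `u`, `(u,w)` the other child
edge of `u`, `(c,v)` the other parent edge of `v`, and `(v,z)` the child edge of `v`.
(If `(u,v)` is one of a pair of parallel edges, i.e. `c = u`, suppressing merges into `(a,z)`.) -/
def snprMinusResult (N : RawNet n) (u v a w c z : ℕ) : RawNet n :=
  if u = c then
    { V := (N.V.erase u).erase v
      E := ((((N.E.erase (u, v)).erase (u, v)).erase (a, u)).erase (v, z)) + {(a, z)}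
      root := N.root
      leaf := N.leaf }
  else
    { V := (N.V.erase u).erase v
      E := (((((N.E.erase (u, v)).erase (a, u)).erase (u, w)).erase (c, v)).erase (v, z))
            + {(a, w), (c, z)}
      root := N.root
      leaf := N.leaf }

/-- `(e,f)` is a tree-child respecting SNPR operation on `N` (with `f` an edge other than `e`,
which is expressed by taking `f` from `N.E.erase e` wherever this predicate is used). -/
def SNPRtcCond (N : RawNet n) (e f : ℕ × ℕ) : Prop :=
  N.inDeg e.1 = 1 ∧ ¬ N.EdgeDesc e f ∧
  ∃ a w u'', (a, e.1) ∈ N.E ∧ (e.1, w) ∈ N.E.erase e ∧ u'' ∉ N.V ∧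
    (N.snprResult e.1 e.2 a w f.1 f.2 u'').TreeChild

/-- The number of tree-child respecting SNPR operations on `N`
(operations are pairs of edges, counted with multiplicity). -/
def numSNPRtc (N : RawNet n) : ℕ :=
  (N.E.map (fun e => ((N.E.erase e).filter (fun f => N.SNPRtcCond e f)).card)).sum

/-- `(e,f)` is a trivial tree-child respecting SNPR operation on `N`. -/
def SNPRtrivCond (N : RawNet n) (e f : ℕ × ℕ) : Prop :=
  N.inDeg e.1 = 1 ∧ ¬ N.EdgeDesc e f ∧
  ∃ a w u'', (a, e.1) ∈ N.E ∧ (e.1, w) ∈ N.E.erase e ∧ u'' ∉ N.V ∧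
    (N.snprResult e.1 e.2 a w f.1 f.2 u'').TreeChild ∧
    (N.snprResult e.1 e.2 a w f.1 f.2 u'').Iso N

/-- The number of trivial tree-child respecting SNPR operations on `N`. -/
def numSNPRtcTrivial (N : RawNet n) : ℕ :=
  (N.E.map (fun e => ((N.E.erase e).filter (fun f => N.SNPRtrivCond e f)).card)).sum

/-- `(e,f)` is a tree-child respecting SNPR+ operation on `N`. -/
def SNPRplusTcCond (N : RawNet n) (e f : ℕ × ℕ) : Prop :=
  ¬ N.IsRet e.1 ∧ ¬ N.EdgeDesc e f ∧
  ∃ u' v', u' ∉ N.V ∧ v' ∉ N.V ∧ u' ≠ v' ∧ (N.snprPlusResult e f u' v').TreeChild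

/-- The number of tree-child respecting SNPR+ operations on `N`. -/
def numSNPRplusTc (N : RawNet n) : ℕ :=
  (N.E.map (fun e => (N.E.filter (fun f => N.SNPRplusTcCond e f)).card)).sum

/-- `e` induces a tree-child respecting SNPR− operation on `N`. -/
def SNPRminusTcCond (N : RawNet n) (e : ℕ × ℕ) : Prop :=
  N.IsRet e.2 ∧ ¬ N.IsRet e.1 ∧
  ∃ a w c z, (a, e.1) ∈ N.E ∧ (e.1, w) ∈ N.E.erase e ∧ (c, e.2) ∈ N.E.erase e ∧
    (e.2, z) ∈ N.E ∧ (N.snprMinusResult e.1 e.2 a w c z).TreeChild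

/-- The number of tree-child respecting SNPR− operations on `N`. -/
def numSNPRminusTc (N : RawNet n) : ℕ :=
  (N.E.filter (fun e => N.SNPRminusTcCond e)).card

/-- `M` is the (concrete) result of applying one SNPR operation to `N`. -/
def IsSNPRres (N M : RawNet n) : Prop :=
  ∃ e f a w u'', e ∈ N.E ∧ f ∈ N.E.erase e ∧ N.inDeg e.1 = 1 ∧ ¬ N.EdgeDesc e f ∧
    (a, e.1) ∈ N.E ∧ (e.1, w) ∈ N.E.erase e ∧ u'' ∉ N.V ∧
    M = N.snprResult e.1 e.2 a w f.1 f.2 u''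

/-- `M` is the (concrete) result of applying one SNPR+ operation to `N`. -/
def IsSNPRplusRes (N M : RawNet n) : Prop :=
  ∃ e f u' v', e ∈ N.E ∧ f ∈ N.E ∧ ¬ N.IsRet e.1 ∧ ¬ N.EdgeDesc e f ∧
    u' ∉ N.V ∧ v' ∉ N.V ∧ u' ≠ v' ∧ M = N.snprPlusResult e f u' v'

/-- `M` is the (concrete) result of applying one SNPR− operation to `N`. -/
def IsSNPRminusRes (N M : RawNet n) : Prop :=
  ∃ e a w c z, e ∈ N.E ∧ N.IsRet e.2 ∧ ¬ N.IsRet e.1 ∧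
    (a, e.1) ∈ N.E ∧ (e.1, w) ∈ N.E.erase e ∧ (c, e.2) ∈ N.E.erase e ∧ (e.2, z) ∈ N.E ∧
    M = N.snprMinusResult e.1 e.2 a w c z

/-- `M` is the result of one operation of type SNPR, SNPR+ or SNPR−. -/
def IsAnyRes (N M : RawNet n) : Prop :=
  N.IsSNPRres M ∨ N.IsSNPRplusRes M ∨ N.IsSNPRminusRes M

/-- The neighbourhood of `N` with respect to a one-step result relation `P` — i.e. the set of
tree-child networks, other than `N` itself, obtainable from `N` by exactly one operation,
counted up to leaf-label-preserving isomorphism — has exactly `k` elements. -/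
def NbhdSizeIs (N : RawNet n) (P : RawNet n → RawNet n → Prop) (k : ℕ) : Prop :=
  ∃ L : List (RawNet n), L.length = k ∧ L.Pairwise (fun A B => ¬ A.Iso B) ∧
    (∀ M ∈ L, P N M ∧ M.TreeChild ∧ ¬ M.Iso N) ∧
    (∀ M, P N M → M.TreeChild → ¬ M.Iso N → ∃ M' ∈ L, M.Iso M')

/-- Number of reticulations `r`. -/
def numRet (N : RawNet n) : ℕ := (N.V.filter (fun v => N.IsRet v)).card

/-- `r₁`: number of reticulations whose child is a leaf. -/
def numR1 (N : RawNet n) : ℕ :=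
  (N.V.filter (fun v => N.IsRet v ∧ ∃ w, (v, w) ∈ N.E ∧ N.outDeg w = 0)).card

/-- `r₂`: number of `r₂` structures (a directed path reticulation → `u` → reticulation),
counted by the middle vertex `u`. -/
def numR2 (N : RawNet n) : ℕ :=
  (N.V.filter (fun u => (∃ x, (x, u) ∈ N.E ∧ N.IsRet x) ∧
    ∃ w, (u, w) ∈ N.E ∧ N.IsRet w)).card

/-- `r₃`: number of `r₃` structures (edges `(x,y), (x,u), (u,w)` with `y, w` reticulations),
counted by the middle vertex `u`. -/
def numR3 (N : RawNet n) : ℕ :=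
  (N.V.filter (fun u => (∃ x y, (x, u) ∈ N.E ∧ (x, y) ∈ N.E.erase (x, u) ∧ N.IsRet y) ∧
    ∃ w, (u, w) ∈ N.E ∧ N.IsRet w)).card

/-- `Δ`: number of triangles (edges `(x,u), (u,w), (x,w)`), counted by the middle vertex `u`. -/
def numTri (N : RawNet n) : ℕ :=
  (N.V.filter (fun u => ∃ x w, (x, u) ∈ N.E ∧ (u, w) ∈ N.E ∧ (x, w) ∈ N.E)).card

/-- `Δ*`: number of tree-branching triangles (the second child `v` of the middle vertex `u`
is incident to three pure tree edges). -/
def numTriStar (N : RawNet n) : ℕ :=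
  (N.V.filter (fun u => ∃ x w v, (x, u) ∈ N.E ∧ (u, w) ∈ N.E ∧ (x, w) ∈ N.E ∧
    (u, v) ∈ N.E.erase (u, w) ∧ N.inDeg v = 1 ∧ N.outDeg v = 2 ∧
    ∀ z, (v, z) ∈ N.E → ¬ N.IsRet z)).card

/-- `D`: number of diamonds (edges `(u,v), (u,w), (v,z), (w,z)` with `v ≠ w`),
counted by the top vertex `u`. -/
def numDia (N : RawNet n) : ℕ :=
  (N.V.filter (fun u => ∃ v w z, v ≠ w ∧ (u, v) ∈ N.E ∧ (u, w) ∈ N.E ∧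
    (v, z) ∈ N.E ∧ (w, z) ∈ N.E)).card

/-- `T`: number of trapezoids (edges `(u,v), (v,w), (w,z), (u,z)`) whose outgoing edges at
`v` and `w` are pure tree edges, counted by the top vertex `u`. -/
def numTrap (N : RawNet n) : ℕ :=
  (N.V.filter (fun u => ∃ v w z, (u, v) ∈ N.E ∧ (v, w) ∈ N.E ∧ (w, z) ∈ N.E ∧
    (u, z) ∈ N.E ∧ (∃ v', (v, v') ∈ N.E.erase (v, w) ∧ ¬ N.IsRet v') ∧
    (∃ w', (w, w') ∈ N.E.erase (w, z) ∧ ¬ N.IsRet w'))).card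

/-- `e` is a critical edge: the tree edge from the middle tree vertex of an `r₂` or `r₃`
structure (or triangle) to its second child. -/
def Critical (N : RawNet n) (e : ℕ × ℕ) : Prop :=
  ¬ N.IsRet e.2 ∧ (∃ w, (e.1, w) ∈ N.E ∧ N.IsRet w) ∧
  ((∃ x, (x, e.1) ∈ N.E ∧ N.IsRet x) ∨
   (∃ x y, (x, e.1) ∈ N.E ∧ (x, y) ∈ N.E.erase (x, e.1) ∧ N.IsRet y))

/-- `e` is a pure tree edge (both endpoints are tree vertices and its head is a tree vertex). -/
def PureTree (N : RawNet n) (e : ℕ × ℕ) : Prop := ¬ N.IsRet e.1 ∧ ¬ N.IsRet e.2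

/-- `Σ_{e ∈ E_{T*}} δ(e)`: sum of `δ` over the pure non-critical tree edges. -/
def sumDeltaTstar (N : RawNet n) : ℕ :=
  ((N.E.filter (fun e => N.PureTree e ∧ ¬ N.Critical e)).map (fun e => N.delta e)).sum

/-- `Σ_{e ∈ E_R} δ_T(e)`: sum of `δ_T` over the reticulation edges. -/
def sumDeltaT_R (N : RawNet n) : ℕ :=
  ((N.E.filter (fun e => N.IsRet e.2)).map (fun e => N.deltaT e)).sum

/-- `e` is the bottom side of a triangle. -/
def TriBottom (N : RawNet n) (e : ℕ × ℕ) : Prop := ∃ x, (x, e.1) ∈ N.E ∧ (x, e.2) ∈ N.E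

/-- `Σ_{e ∈ E_Δ} δ_T(e)`: sum of `δ_T` over the bottom sides of triangles. -/
def sumDeltaT_Tri (N : RawNet n) : ℕ :=
  ((N.E.filter (fun e => N.TriBottom e)).map (fun e => N.deltaT e)).sum

/-- `e` is a pure tree edge whose sibling edge is also a pure tree edge. -/
def PSedge (N : RawNet n) (e : ℕ × ℕ) : Prop :=
  N.PureTree e ∧ ∃ w, (e.1, w) ∈ N.E.erase e ∧ ¬ N.IsRet w

/-- `Σ_{e ∈ E_{PS}} δ_T(e)`. -/
def sumDeltaT_PS (N : RawNet n) : ℕ :=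
  ((N.E.filter (fun e => N.PSedge e)).map (fun e => N.deltaT e)).sum

/-- `Σ_{e ∈ E} δ(e)`: sum of `δ` over all edges. -/
def sumDeltaAll (N : RawNet n) : ℕ :=
  (N.E.map (fun e => N.delta e)).sum

/-- Number of pure inner tree edges: edges incident to no reticulation, no leaf,
and not to the root. -/
def numPureInner (N : RawNet n) : ℕ :=
  (N.E.filter (fun e => e.1 ≠ N.root ∧ e.2 ≠ N.root ∧ N.outDeg e.1 ≠ 0 ∧
    N.outDeg e.2 ≠ 0 ∧ ¬ N.IsRet e.1 ∧ ¬ N.IsRet e.2)).card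

/-- The multiset of tree-child respecting SNPR operations `(e,f)` on `N`
(with multiplicity coming from parallel edges). -/
def OpsTCms (N : RawNet n) : Multiset ((ℕ × ℕ) × (ℕ × ℕ)) :=
  N.E.bind (fun e => ((N.E.erase e).filter (fun f => N.SNPRtcCond e f)).map (fun f => (e, f)))

/-- The result of the SNPR operation `θ = (e,f)` on `N` is isomorphic to `M`. -/
def ResultIsoOp (N : RawNet n) (θ : (ℕ × ℕ) × (ℕ × ℕ)) (M : RawNet n) : Prop :=
  ∃ a w u'', (a, θ.1.1) ∈ N.E ∧ (θ.1.1, w) ∈ N.E.erase θ.1 ∧ u'' ∉ N.V ∧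
    (N.snprResult θ.1.1 θ.1.2 a w θ.2.1 θ.2.2 u'').Iso M

/-- `M ≠ N` is obtained from `N` by at least two distinct (redundant) non-trivial
tree-child respecting SNPR operations. -/
def MultiResult (N M : RawNet n) : Prop :=
  ¬ M.Iso N ∧ ∃ θ θ', θ ∈ N.OpsTCms ∧ θ' ∈ N.OpsTCms ∧
    (θ ≠ θ' ∨ 2 ≤ N.OpsTCms.count θ) ∧ N.ResultIsoOp θ M ∧ N.ResultIsoOp θ' M

/-- The number of non-trivial redundant tree-child respecting SNPR operations on `N`. -/
def numNontrivRedundant (N : RawNet n) : ℕ :=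
  (N.OpsTCms.filter (fun θ => ∃ M, N.MultiResult M ∧ N.ResultIsoOp θ M)).card

/-- The number of redundancy sets of non-trivial tree-child respecting SNPR operations on `N`
is `k` (one redundancy set per isomorphism class of networks reached by at least two
redundant non-trivial operations). -/
def NumRedSetsIs (N : RawNet n) (k : ℕ) : Prop :=
  ∃ L : List (RawNet n), L.length = k ∧ L.Pairwise (fun A B => ¬ A.Iso B) ∧
    (∀ M ∈ L, N.MultiResult M) ∧ (∀ M, N.MultiResult M → ∃ M' ∈ L, M.Iso M')

/-- `M` is the result of an NNI operation on the tree `T`: for an inner tree edge `(u,v)`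
(the axis) with sibling edge `(u,s)`, prune an edge `(v,g2)` outgoing from `v`
(whose sibling edge at `v` is `(v,w')`) and regraft it to `(u,s)`. -/
def IsNNIres (T M : RawNet n) : Prop :=
  ∃ u v s g2 w' u'', (u, v) ∈ T.E ∧ (u, s) ∈ T.E.erase (u, v) ∧ T.inDeg u = 1 ∧
    (v, g2) ∈ T.E ∧ (v, w') ∈ T.E.erase (v, g2) ∧ u'' ∉ T.V ∧
    M = T.snprResult v g2 u w' u s u''

end RawNet

/-- The balanced (complete) rooted binary phylogenetic tree on `2^k` leaves: root `0` with
root edge `(0,1)`, inner vertices `1, …, 2^k − 1` with children `2i` and `2i+1`, and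
leaves `2^k, …, 2^(k+1) − 1`. -/
def balancedTree (k : ℕ) : RawNet (2 ^ k) :=
  { V := Finset.range (2 ^ (k + 1))
    E := (0, 1) ::ₘ ((Finset.Icc 1 (2 ^ k - 1)).val.bind
          (fun i => {(i, 2 * i), (i, 2 * i + 1)}))
    root := 0
    leaf := fun i => 2 ^ k + (i : ℕ) }

/-- The tree-child network consisting of a chain of `n − 1` triangles: the root is `0`; the
`j`-th triangle (for `j = 0, …, n−2`) has top vertex `3j+1`, middle tree vertex `3j+2` and
reticulation `3j+3`; the second child of the middle vertex is the leaf `3(n−1)+1+j`; the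
child of the reticulation of triangle `j` is the top vertex of triangle `j+1`, except for
the last triangle, whose reticulation has the leaf `3(n−1)+n` as its child. -/
def chainNet (n : ℕ) : RawNet n :=
  { V := Finset.range (3 * (n - 1) + 1 + n)
    E := (0, 1) ::ₘ
      (((Multiset.range (n - 1)).bind (fun j =>
          {(3 * j + 1, 3 * j + 2), (3 * j + 1, 3 * j + 3), (3 * j + 2, 3 * j + 3),
           (3 * j + 2, 3 * (n - 1) + 1 + j)}))
        + ((Multiset.range (n - 2)).map (fun j => (3 * j + 3, 3 * (j + 1) + 1)))
        + {(3 * (n - 2) + 3, 3 * (n - 1) + 1 + (n - 1))})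
    root := 0
    leaf := fun i => 3 * (n - 1) + 1 + (i : ℕ) }

/-!
Let `T` be the set of inner tree vertices and `R` the set of reticulations. Counting the edges
once by their heads and once by their tails gives `n + |T| + 2|R| = 1 + 2|T| + |R|`, so
`|T| + 1 = n + |R|`. Counting instead the edges entering `T` (one per vertex of `T`) by the
type of their tail: the root contributes exactly one, because its child is neither a leaf
(as `n ≥ 2`) nor a reticulation (tree-child); inner tree vertices contribute the `p` pure inner
tree edges; and by tree-child the child of a reticulation is a tree vertex or a leaf, so
reticulations contribute `|R| - r₁`. Hence `|T| = 1 + p + |R| - r₁`, and `p = n + r₁ - 2`.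
-/

namespace Multiset

theorem card_filter_and_add_card_filter_not_and {α : Type*} (s : Multiset α) (p q : α → Prop)
    [DecidablePred p] [DecidablePred q] :
    card (s.filter fun a => q a ∧ p a) + card (s.filter fun a => ¬ q a ∧ p a) =
      card (s.filter p) := by
  rw [← card_add, ← filter_filter, ← filter_filter, filter_add_not]

theorem card_filter_mem_eq_sum {α β : Type*} [DecidableEq β] (s : Multiset α) (f : α → β)
    (S : Finset β) :
    card (s.filter fun a => f a ∈ S) = ∑ b ∈ S, card (s.filter fun a => f a = b) := by
  induction S using Finset.induction_on with
  | empty => simp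
  | insert b S hb ih =>
    have hdisj : s.filter (fun a => f a = b ∧ f a ∈ S) = 0 :=
      filter_eq_nil.2 fun a _ h => hb (h.1 ▸ h.2)
    rw [Finset.sum_insert hb, ← ih, ← card_add, filter_add_filter, hdisj, add_zero]
    exact congrArg _ (filter_congr (by simp))

end Multiset

namespace RawNet

variable {n : ℕ}

section Degrees

variable (N : RawNet n) {u v w : ℕ}

theorem card_filter_snd_mem (S : Finset ℕ) :
    Multiset.card (N.E.filter fun e => e.2 ∈ S) = ∑ v ∈ S, N.inDeg v :=
  Multiset.card_filter_mem_eq_sum _ _ _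

theorem card_filter_fst_mem (S : Finset ℕ) :
    Multiset.card (N.E.filter fun e => e.1 ∈ S) = ∑ v ∈ S, N.outDeg v :=
  Multiset.card_filter_mem_eq_sum _ _ _

theorem card_filter_snd_mem_of_inDeg_eq_one {S : Finset ℕ} (hS : ∀ v ∈ S, N.inDeg v = 1) :
    Multiset.card (N.E.filter fun e => e.2 ∈ S) = S.card := by
  rw [card_filter_snd_mem, Finset.sum_congr rfl hS, Finset.card_eq_sum_ones]

theorem card_filter_fst_mem_of_outDeg_eq_one {S : Finset ℕ} (hS : ∀ v ∈ S, N.outDeg v = 1) :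
    Multiset.card (N.E.filter fun e => e.1 ∈ S) = S.card := by
  rw [card_filter_fst_mem, Finset.sum_congr rfl hS, Finset.card_eq_sum_ones]

theorem inDeg_pos_iff : 0 < N.inDeg v ↔ ∃ u, (u, v) ∈ N.E := by
  simp [inDeg, Multiset.card_pos_iff_exists_mem]

theorem outDeg_pos_iff : 0 < N.outDeg u ↔ ∃ v, (u, v) ∈ N.E := by
  simp [outDeg, Multiset.card_pos_iff_exists_mem]

theorem eq_of_outDeg_eq_one (hu : N.outDeg u = 1) (hv : (u, v) ∈ N.E) (hw : (u, w) ∈ N.E) :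
    w = v := by
  obtain ⟨x, hx⟩ := Multiset.card_eq_one.1 hu
  have hv' : (u, v) ∈ N.E.filter (·.1 = u) := Multiset.mem_filter.2 ⟨hv, rfl⟩
  have hw' : (u, w) ∈ N.E.filter (·.1 = u) := Multiset.mem_filter.2 ⟨hw, rfl⟩
  rw [hx, Multiset.mem_singleton] at hv' hw'
  exact congrArg Prod.snd (hw'.trans hv'.symm)

end Degrees

def innerTreeVertices (N : RawNet n) : Finset ℕ :=
  N.V.filter fun v => N.inDeg v = 1 ∧ N.outDeg v = 2

def reticulations (N : RawNet n) : Finset ℕ :=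
  N.V.filter fun v => N.IsRet v

theorem TreeChild.not_isRet_of_outDeg_eq_one {N : RawNet n} {u v : ℕ} (htc : N.TreeChild)
    (hu : u ∈ N.V) (huv : (u, v) ∈ N.E) (h1 : N.outDeg u = 1) : ¬ N.IsRet v := by
  obtain ⟨w, huw, hw⟩ := htc u hu h1.ge
  rwa [N.eq_of_outDeg_eq_one h1 huw huv]

namespace IsPhylo

variable {N : RawNet n} {v w : ℕ}

theorem deg_cases (hN : N.IsPhylo) (hv : v ∈ N.V) :
    (v = N.root ∧ N.inDeg v = 0 ∧ N.outDeg v = 1) ∨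
    ((∃ i, v = N.leaf i) ∧ N.inDeg v = 1 ∧ N.outDeg v = 0) ∨
    (N.inDeg v = 1 ∧ N.outDeg v = 2) ∨ (N.inDeg v = 2 ∧ N.outDeg v = 1) := by
  rcases hN.classify v hv with rfl | ⟨i, rfl⟩ | h | h
  · exact .inl ⟨rfl, hN.root_in, hN.root_out⟩
  · exact .inr (.inl ⟨⟨i, rfl⟩, hN.leaf_in i, hN.leaf_out i⟩)
  · exact .inr (.inr (.inl h))
  · exact .inr (.inr (.inr h))

theorem card_filter_outDeg_eq_zero (hN : N.IsPhylo) :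
    (N.V.filter fun v => N.outDeg v = 0).card = n := by
  have hleaves : (N.V.filter fun v => N.outDeg v = 0) = Finset.univ.image N.leaf := by
    ext v
    simp only [Finset.mem_filter, Finset.mem_image, Finset.mem_univ, true_and]
    constructor
    · rintro ⟨hv, h0⟩
      rcases hN.deg_cases hv with ⟨-, -, h⟩ | ⟨⟨i, rfl⟩, -⟩ | ⟨-, h⟩ | ⟨-, h⟩
      · omega
      · exact ⟨i, rfl⟩
      all_goals omega
    · rintro ⟨i, rfl⟩
      exact ⟨hN.leaf_mem i, hN.leaf_out i⟩
  rw [hleaves, Finset.card_image_of_injective _ hN.leaf_inj, Finset.card_univ, Fintype.card_fin]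

theorem filter_inDeg_eq_zero (hN : N.IsPhylo) :
    (N.V.filter fun v => N.inDeg v = 0) = {N.root} := by
  ext v
  simp only [Finset.mem_filter, Finset.mem_singleton]
  constructor
  · rintro ⟨hv, h0⟩
    rcases hN.deg_cases hv with ⟨h, -⟩ | ⟨-, h, -⟩ | ⟨h, -⟩ | ⟨h, -⟩
    · exact h
    all_goals omega
  · rintro rfl
    exact ⟨hN.root_mem, hN.root_in⟩

theorem sum_inDeg (hN : N.IsPhylo) :
    ∑ v ∈ N.V, N.inDeg v = n + N.innerTreeVertices.card + 2 * N.reticulations.card := by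
  have hcases : ∀ v ∈ N.V, N.inDeg v = (if N.outDeg v = 0 then 1 else 0) +
      (if N.inDeg v = 1 ∧ N.outDeg v = 2 then 1 else 0) + 2 * (if N.IsRet v then 1 else 0) := by
    intro v hv
    unfold IsRet
    rcases hN.deg_cases hv with ⟨-, h⟩ | ⟨-, h⟩ | h | h <;> split_ifs <;> omega
  rw [Finset.sum_congr rfl hcases, Finset.sum_add_distrib, Finset.sum_add_distrib,
    ← Finset.mul_sum, Finset.sum_boole, Finset.sum_boole, Finset.sum_boole,
    hN.card_filter_outDeg_eq_zero]
  rfl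

theorem sum_outDeg (hN : N.IsPhylo) :
    ∑ v ∈ N.V, N.outDeg v = 1 + 2 * N.innerTreeVertices.card + N.reticulations.card := by
  have hcases : ∀ v ∈ N.V, N.outDeg v = (if N.inDeg v = 0 then 1 else 0) +
      2 * (if N.inDeg v = 1 ∧ N.outDeg v = 2 then 1 else 0) + (if N.IsRet v then 1 else 0) := by
    intro v hv
    unfold IsRet
    rcases hN.deg_cases hv with ⟨-, h⟩ | ⟨-, h⟩ | h | h <;> split_ifs <;> omega
  rw [Finset.sum_congr rfl hcases, Finset.sum_add_distrib, Finset.sum_add_distrib,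
    ← Finset.mul_sum, Finset.sum_boole, Finset.sum_boole, Finset.sum_boole,
    hN.filter_inDeg_eq_zero]
  rfl

theorem card_innerTreeVertices_add_one (hN : N.IsPhylo) :
    N.innerTreeVertices.card + 1 = n + N.reticulations.card := by
  have hin := N.card_filter_snd_mem N.V
  have hout := N.card_filter_fst_mem N.V
  rw [Multiset.filter_eq_self.2 fun e he => (hN.edge_mem e he).2, hN.sum_inDeg] at hin
  rw [Multiset.filter_eq_self.2 fun e he => (hN.edge_mem e he).1, hN.sum_outDeg] at hout
  omega

theorem reflTransGen_root (hN : N.IsPhylo) (hv : v ∈ N.V) :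
    Relation.ReflTransGen N.Adj N.root v := by
  -- Acyclicity makes `TransGen N.Adj` a strict order, hence well-founded on the finite `N.V`.
  have : IsStrictOrder ℕ (Relation.TransGen N.Adj) :=
    { irrefl := hN.acyclic, trans := fun _ _ _ => Relation.TransGen.trans }
  refine (N.V.wellFoundedOn (r := Relation.TransGen N.Adj)).induction hv fun v hv ih => ?_
  rcases hN.deg_cases hv with ⟨rfl, -⟩ | ⟨-, hin, -⟩ | ⟨hin, -⟩ | ⟨hin, -⟩
  · exact .refl
  all_goals
    obtain ⟨u, huv⟩ := N.inDeg_pos_iff.1 (by omega : 0 < N.inDeg v)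
    exact (ih u (hN.edge_mem _ huv).1 (.single huv)).tail huv

theorem outDeg_ne_zero_of_root_adj (hN : N.IsPhylo) (hn : 2 ≤ n) (hw : (N.root, w) ∈ N.E) :
    N.outDeg w ≠ 0 := by
  intro hw0
  obtain ⟨i, hiw⟩ : ∃ i : Fin n, N.leaf i ≠ w := by
    by_contra! h
    have h01 := hN.leaf_inj ((h ⟨0, by omega⟩).trans (h ⟨1, by omega⟩).symm)
    simp [Fin.ext_iff] at h01
  have hir : N.root ≠ N.leaf i := by
    intro h
    have := hN.leaf_in i
    rw [← h, hN.root_in] at this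
    omega
  -- A path from the root to the leaf `i` has to pass through `w`, the root's only child.
  rcases Relation.ReflTransGen.cases_head_iff.1 (hN.reflTransGen_root (hN.leaf_mem i)) with
    h | ⟨c, hc, hci⟩
  · exact hir h
  rw [N.eq_of_outDeg_eq_one hN.root_out hw hc] at hci
  rcases Relation.ReflTransGen.cases_head_iff.1 hci with h | ⟨d, hd, -⟩
  · exact hiw h.symm
  · exact (N.outDeg_pos_iff.2 ⟨d, hd⟩).ne' hw0

theorem mem_innerTreeVertices_iff (hN : N.IsPhylo) (hv : v ∈ N.V) :
    v ∈ N.innerTreeVertices ↔ v ≠ N.root ∧ N.outDeg v ≠ 0 ∧ ¬ N.IsRet v := by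
  unfold innerTreeVertices IsRet
  rw [Finset.mem_filter, and_iff_right hv]
  rcases hN.deg_cases hv with ⟨rfl, h⟩ | ⟨-, h⟩ | h | h
  · exact iff_of_false (by omega) fun h' => h'.1 rfl
  · exact iff_of_false (by omega) (by omega)
  · refine iff_of_true h ⟨?_, by omega, by omega⟩
    rintro rfl
    have := hN.root_in
    omega
  · exact iff_of_false (by omega) (by omega)

theorem mem_reticulations_iff (hN : N.IsPhylo) (hv : v ∈ N.V) (h0 : N.outDeg v ≠ 0) :
    v ∈ N.reticulations ↔ v ≠ N.root ∧ v ∉ N.innerTreeVertices := by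
  rw [hN.mem_innerTreeVertices_iff hv, reticulations, Finset.mem_filter, and_iff_right hv]
  unfold IsRet
  rcases hN.deg_cases hv with ⟨rfl, h⟩ | ⟨-, h⟩ | h | h
  · exact iff_of_false (by omega) fun h' => h'.1 rfl
  · omega
  · exact iff_of_false (by omega) fun h' => h'.2 ⟨h'.1, by omega, by omega⟩
  · refine iff_of_true h.1 ⟨?_, fun h' => h'.2.2 h.1⟩
    rintro rfl
    have := hN.root_in
    omega

theorem snd_ne_root (hN : N.IsPhylo) (hvw : (v, w) ∈ N.E) : w ≠ N.root := by
  rintro rfl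
  exact (N.inDeg_pos_iff.2 ⟨v, hvw⟩).ne' hN.root_in

theorem outDeg_eq_one_of_mem_reticulations (hN : N.IsPhylo) (hv : v ∈ N.reticulations) :
    N.outDeg v = 1 := by
  obtain ⟨hvV, hret⟩ := Finset.mem_filter.1 hv
  unfold IsRet at hret
  rcases hN.deg_cases hvV with ⟨-, h⟩ | ⟨-, h⟩ | h | h <;> omega

theorem mem_innerTreeVertices_of_root_adj (hN : N.IsPhylo) (htc : N.TreeChild) (hn : 2 ≤ n)
    (hw : (N.root, w) ∈ N.E) : w ∈ N.innerTreeVertices :=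
  (hN.mem_innerTreeVertices_iff (hN.edge_mem _ hw).2).2
    ⟨hN.snd_ne_root hw, hN.outDeg_ne_zero_of_root_adj hn hw,
      htc.not_isRet_of_outDeg_eq_one hN.root_mem hw hN.root_out⟩

theorem mem_innerTreeVertices_iff_of_mem_reticulations (hN : N.IsPhylo) (htc : N.TreeChild)
    (hv : v ∈ N.reticulations) (hvw : (v, w) ∈ N.E) :
    w ∈ N.innerTreeVertices ↔ N.outDeg w ≠ 0 := by
  rw [hN.mem_innerTreeVertices_iff (hN.edge_mem _ hvw).2]
  have hv1 := hN.outDeg_eq_one_of_mem_reticulations hv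
  have hw := htc.not_isRet_of_outDeg_eq_one (Finset.mem_filter.1 hv).1 hvw hv1
  exact ⟨fun h => h.2.1, fun h => ⟨hN.snd_ne_root hvw, h, hw⟩⟩

theorem numR1_eq_card_filter (hN : N.IsPhylo) (htc : N.TreeChild) :
    N.numR1 = Multiset.card
      (N.E.filter fun e => e.1 ∈ N.reticulations ∧ e.2 ∉ N.innerTreeVertices) := by
  have hR1 : ∀ v ∈ N.V.filter (fun v => N.IsRet v ∧ ∃ w, (v, w) ∈ N.E ∧ N.outDeg w = 0),
      N.outDeg v = 1 := fun v hv =>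
    hN.outDeg_eq_one_of_mem_reticulations
      (Finset.mem_filter.2 ((Finset.mem_filter.1 hv).imp_right And.left))
  rw [numR1, ← N.card_filter_fst_mem_of_outDeg_eq_one hR1]
  refine congrArg _ (Multiset.filter_congr fun e he => ?_)
  have he' : (e.1, e.2) ∈ N.E := he
  rw [Finset.mem_filter]
  constructor
  · rintro ⟨hV, hret, w, hw, hw0⟩
    have hR : e.1 ∈ N.reticulations := Finset.mem_filter.2 ⟨hV, hret⟩
    rw [hN.mem_innerTreeVertices_iff_of_mem_reticulations htc hR he', not_not,
      N.eq_of_outDeg_eq_one (hN.outDeg_eq_one_of_mem_reticulations hR) hw he']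
    exact ⟨hR, hw0⟩
  · rintro ⟨hR, hT⟩
    rw [hN.mem_innerTreeVertices_iff_of_mem_reticulations htc hR he', not_not] at hT
    obtain ⟨hV, hret⟩ := Finset.mem_filter.1 hR
    exact ⟨hV, hret, e.2, he', hT⟩

theorem card_filter_reticulations_innerTreeVertices_add_numR1 (hN : N.IsPhylo)
    (htc : N.TreeChild) :
    Multiset.card (N.E.filter fun e => e.1 ∈ N.reticulations ∧ e.2 ∈ N.innerTreeVertices) +
      N.numR1 = N.reticulations.card := by
  rw [hN.numR1_eq_card_filter htc, ← N.card_filter_fst_mem_of_outDeg_eq_one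
    fun v => hN.outDeg_eq_one_of_mem_reticulations,
    ← Multiset.card_filter_and_add_card_filter_not_and N.E (fun e => e.1 ∈ N.reticulations)
      fun e => e.2 ∈ N.innerTreeVertices]
  exact congrArg₂ (· + ·) (congrArg _ (Multiset.filter_congr fun _ _ => and_comm))
    (congrArg _ (Multiset.filter_congr fun _ _ => and_comm))

theorem numPureInner_eq_card_filter (hN : N.IsPhylo) :
    N.numPureInner = Multiset.card
      (N.E.filter fun e => e.1 ∈ N.innerTreeVertices ∧ e.2 ∈ N.innerTreeVertices) := by
  refine congrArg _ (Multiset.filter_congr fun e he => ?_)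
  rw [hN.mem_innerTreeVertices_iff (hN.edge_mem e he).1,
    hN.mem_innerTreeVertices_iff (hN.edge_mem e he).2]
  tauto

theorem card_innerTreeVertices_eq (hN : N.IsPhylo) (htc : N.TreeChild) (hn : 2 ≤ n) :
    N.innerTreeVertices.card = 1 + N.numPureInner + Multiset.card
      (N.E.filter fun e => e.1 ∈ N.reticulations ∧ e.2 ∈ N.innerTreeVertices) := by
  have hT := N.card_filter_snd_mem_of_inDeg_eq_one (S := N.innerTreeVertices)
    fun v hv => (Finset.mem_filter.1 hv).2.1
  have hsplit₁ := Multiset.card_filter_and_add_card_filter_not_and N.E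
    (fun e => e.2 ∈ N.innerTreeVertices) (fun e => e.1 ∈ N.innerTreeVertices)
  have hsplit₂ := Multiset.card_filter_and_add_card_filter_not_and N.E
    (fun e => e.1 ∉ N.innerTreeVertices ∧ e.2 ∈ N.innerTreeVertices) (fun e => e.1 = N.root)
  have hroot : Multiset.card (N.E.filter fun e =>
      e.1 = N.root ∧ e.1 ∉ N.innerTreeVertices ∧ e.2 ∈ N.innerTreeVertices) = 1 := by
    rw [← hN.root_out]
    refine congrArg _ (Multiset.filter_congr fun e he => ⟨And.left, fun h => ⟨h, ?_, ?_⟩⟩)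
    · rw [hN.mem_innerTreeVertices_iff (hN.edge_mem e he).1]
      exact fun h' => h'.1 h
    · exact hN.mem_innerTreeVertices_of_root_adj htc hn (h ▸ he)
  have hret : Multiset.card (N.E.filter fun e =>
      ¬ e.1 = N.root ∧ e.1 ∉ N.innerTreeVertices ∧ e.2 ∈ N.innerTreeVertices) =
      Multiset.card
        (N.E.filter fun e => e.1 ∈ N.reticulations ∧ e.2 ∈ N.innerTreeVertices) := by
    refine congrArg _ (Multiset.filter_congr fun e he => ?_)
    rw [hN.mem_reticulations_iff (hN.edge_mem e he).1 (N.outDeg_pos_iff.2 ⟨e.2, he⟩).ne']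
    tauto
  rw [hN.numPureInner_eq_card_filter]
  omega

end IsPhylo

end RawNet

/-- A tree-child network on `n ≥ 2` leaves with `r` reticulations, of which
`r₁` have a leaf as child, has exactly `n + r₁ − 2` pure inner tree edges (edges incident
to no reticulation, no leaf, and not to the root). -/
theorem numPureInner_eq (n : ℕ) (hn : 2 ≤ n) (N : RawNet n)
    (hN : N.IsPhylo) (htc : N.TreeChild) :
    (N.numPureInner : ℤ) = (n : ℤ) + (N.numR1 : ℤ) - 2 := by
  have hT := hN.card_innerTreeVertices_eq htc hn
  have hR := hN.card_filter_reticulations_innerTreeVertices_add_numR1 htc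
  have hV := hN.card_innerTreeVertices_add_one
  omega
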